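/- Let q ∈ (0,1) and let μ be a Borel probability measure on ℝ supported in [1, C] for some C ≥ 1, and set ν := T_q μ. Then ∫ z² dν ≤ 2(1−q)·∫ x² dμ + (2−q)·(∫ x dμ)². -/

import Mathlib

open MeasureTheory ProbabilityTheory Filter

noncomputable def Sfun : ℝ × ℝ → ℝ := fun p => p.1 + p.2

noncomputable def Dfun : ℝ × ℝ × ℝ × ℝ → ℝ := fun p =>
  ((p.1 + p.2.1) * (p.2.2.1 + p.2.2.2)) / (p.1 + p.2.1 + p.2.2.1 + p.2.2.2)

/-- One-step resistance recursion map on Borel measures on ℝ. -/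
noncomputable def Tq (q : ℝ) (μ : Measure ℝ) : Measure ℝ :=
  ENNReal.ofReal (1 - q) • Measure.map Sfun (μ.prod μ) +
    ENNReal.ofReal q • Measure.map Dfun (μ.prod (μ.prod (μ.prod μ)))

/-- μₙ = T_qⁿ δ₁ : law of the two-terminal resistance after n replacement steps. -/
noncomputable def mu (q : ℝ) (n : ℕ) : Measure ℝ := (Tq q)^[n] (Measure.dirac 1)

/-!
Both branches of `T_q μ` are read through the convolution `π = μ ∗ μ`. The series branch is `π`
itself, whose second moment is `2 ∫ x² dμ + 2 m²` with `m = ∫ x dμ`. Regrouping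
`D(x₁, x₂, x₃, x₄) = (x₁ + x₂) ∥ (x₃ + x₄)` with `a ∥ b = ab / (a + b)` shows that the other branch
is the law of the parallel sum of two independent samples of `π`. Since `(a + b)² ≥ 4ab`, we have
`(a ∥ b)² ≤ ab / 4` for `a, b ≥ 0`, whose mean is `(2m)² / 4 = m²`.
-/

open scoped ENNReal

noncomputable def parallel (p : ℝ × ℝ) : ℝ := p.1 * p.2 / (p.1 + p.2)

lemma measurable_parallel : Measurable parallel := by
  unfold parallel; fun_prop

lemma measurable_Dfun : Measurable Dfun := by
  unfold Dfun; fun_prop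

lemma Dfun_eq_parallel (a b c d : ℝ) : Dfun (a, b, c, d) = parallel (a + b, c + d) := by
  simp only [Dfun, parallel, add_assoc]

lemma sq_parallel_le {a b : ℝ} (ha : 0 ≤ a) (hb : 0 ≤ b) : parallel (a, b) ^ 2 ≤ a * b / 4 := by
  rcases (add_nonneg ha hb).eq_or_lt with hab | hab
  · obtain rfl : a = 0 := by linarith
    obtain rfl : b = 0 := by linarith
    simp [parallel]
  · rw [parallel, div_pow, div_le_div_iff₀ (by positivity) four_pos]
    nlinarith [sq_nonneg (a - b), mul_nonneg ha hb]

section Convolution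

variable {μ ν : Measure ℝ}

lemma memLp_id_conv {p : ℝ≥0∞} [IsFiniteMeasure μ] [IsFiniteMeasure ν]
    (hμ : MemLp id p μ) (hν : MemLp id p ν) : MemLp id p (μ ∗ ν) := by
  rw [Measure.conv, memLp_map_measure_iff aestronglyMeasurable_id (by fun_prop)]
  exact (hμ.comp_fst ν).add (hν.comp_snd μ)

lemma ae_nonneg_conv [SFinite ν] (hμ : ∀ᵐ x ∂μ, 0 ≤ x) (hν : ∀ᵐ x ∂ν, 0 ≤ x) :
    ∀ᵐ x ∂(μ ∗ ν), 0 ≤ x := by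
  rw [Measure.conv, ae_map_iff (by fun_prop) measurableSet_Ici]
  filter_upwards [Measure.quasiMeasurePreserving_fst.ae hμ,
    Measure.quasiMeasurePreserving_snd.ae hν] with p h₁ h₂
  exact add_nonneg h₁ h₂

variable [IsProbabilityMeasure μ] [IsProbabilityMeasure ν]

lemma integral_id_conv (hμ : Integrable id μ) (hν : Integrable id ν) :
    ∫ x, x ∂(μ ∗ ν) = ∫ x, x ∂μ + ∫ x, x ∂ν := by
  rw [Measure.conv, integral_map (by fun_prop) (by fun_prop),
    integral_add (f := fun p : ℝ × ℝ => p.1) (g := fun p : ℝ × ℝ => p.2)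
      (hμ.comp_fst ν) (hν.comp_snd μ),
    integral_fun_fst (f := fun x : ℝ => x), integral_fun_snd (f := fun x : ℝ => x)]
  simp

lemma integral_sq_conv (hμ : MemLp id 2 μ) (hν : MemLp id 2 ν) :
    ∫ x, x ^ 2 ∂(μ ∗ ν) =
      ∫ x, x ^ 2 ∂μ + 2 * (∫ x, x ∂μ) * (∫ x, x ∂ν) + ∫ x, x ^ 2 ∂ν := by
  have hμ₂ : Integrable (fun x : ℝ => x ^ 2) μ :=
    (memLp_two_iff_integrable_sq aestronglyMeasurable_id).1 hμ
  have hν₂ : Integrable (fun x : ℝ => x ^ 2) ν :=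
    (memLp_two_iff_integrable_sq aestronglyMeasurable_id).1 hν
  have hmul : Integrable (fun p : ℝ × ℝ => 2 * (p.1 * p.2)) (μ.prod ν) :=
    ((hμ.integrable one_le_two).mul_prod (hν.integrable one_le_two)).const_mul 2
  rw [Measure.conv, integral_map (by fun_prop) (by fun_prop)]
  simp_rw [show ∀ a b : ℝ, (a + b) ^ 2 = a ^ 2 + (b ^ 2 + 2 * (a * b)) from fun a b => by ring]
  rw [integral_add (f := fun p : ℝ × ℝ => p.1 ^ 2)
      (g := fun p : ℝ × ℝ => p.2 ^ 2 + 2 * (p.1 * p.2))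
      (hμ₂.comp_fst ν) ((hν₂.comp_snd μ).add hmul),
    integral_add (hν₂.comp_snd μ) hmul, integral_const_mul,
    integral_fun_fst (f := fun x : ℝ => x ^ 2), integral_fun_snd (f := fun x : ℝ => x ^ 2),
    integral_prod_mul (f := fun x : ℝ => x) (g := fun x : ℝ => x)]
  simp only [probReal_univ, one_smul]
  ring

end Convolution

section Parallel

variable {μ ν : Measure ℝ}

lemma ae_sq_parallel_le (hμ₀ : ∀ᵐ x ∂μ, 0 ≤ x) (hν₀ : ∀ᵐ x ∂ν, 0 ≤ x) :
    ∀ᵐ p ∂(μ.prod ν), parallel p ^ 2 ≤ p.1 * p.2 / 4 := by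
  filter_upwards [Measure.quasiMeasurePreserving_fst.ae hμ₀,
    Measure.quasiMeasurePreserving_snd.ae hν₀] with p h₁ h₂
  exact sq_parallel_le h₁ h₂

lemma integrable_sq_parallel (hμ₀ : ∀ᵐ x ∂μ, 0 ≤ x) (hν₀ : ∀ᵐ x ∂ν, 0 ≤ x)
    (hμ : Integrable id μ) (hν : Integrable id ν) :
    Integrable (fun p => parallel p ^ 2) (μ.prod ν) := by
  refine ((hμ.mul_prod hν).div_const 4).mono'
    (measurable_parallel.pow_const 2).aestronglyMeasurable ?_
  filter_upwards [ae_sq_parallel_le hμ₀ hν₀] with p hp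
  rwa [Real.norm_of_nonneg (sq_nonneg _)]

lemma integral_sq_parallel_le [SFinite μ] [SFinite ν]
    (hμ₀ : ∀ᵐ x ∂μ, 0 ≤ x) (hν₀ : ∀ᵐ x ∂ν, 0 ≤ x)
    (hμ : Integrable id μ) (hν : Integrable id ν) :
    ∫ p, parallel p ^ 2 ∂(μ.prod ν) ≤ (∫ x, x ∂μ) * (∫ x, x ∂ν) / 4 := by
  rw [← integral_prod_mul (f := fun x : ℝ => x) (g := fun x : ℝ => x), ← integral_div]
  exact integral_mono_of_nonneg (ae_of_all _ fun _ => sq_nonneg _)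
    ((hμ.mul_prod hν).div_const 4) (ae_sq_parallel_le hμ₀ hν₀)

end Parallel

lemma map_Dfun_prod (μ : Measure ℝ) [SFinite μ] :
    (μ.prod (μ.prod (μ.prod μ))).map Dfun = ((μ ∗ μ).prod (μ ∗ μ)).map parallel := by
  have hadd : Measurable fun p : ℝ × ℝ => p.1 + p.2 := by fun_prop
  rw [← Measure.prodAssoc_prod,
    Measure.map_map measurable_Dfun MeasurableEquiv.prodAssoc.measurable,
    Measure.conv, Measure.map_prod_map _ _ hadd hadd,
    Measure.map_map measurable_parallel (hadd.prodMap hadd)]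
  congr 1
  ext ⟨⟨a, b⟩, c, d⟩
  exact Dfun_eq_parallel a b c d

lemma Tq_eq (q : ℝ) (μ : Measure ℝ) [SFinite μ] :
    Tq q μ = ENNReal.ofReal (1 - q) • (μ ∗ μ) +
      ENNReal.ofReal q • ((μ ∗ μ).prod (μ ∗ μ)).map parallel := by
  rw [Tq, map_Dfun_prod]
  rfl

lemma integral_Tq {q : ℝ} (hq : q ∈ Set.Icc (0 : ℝ) 1) {μ : Measure ℝ} [SFinite μ] {g : ℝ → ℝ}
    (hg : Measurable g) (hconv : Integrable g (μ ∗ μ))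
    (hpar : Integrable (fun p => g (parallel p)) ((μ ∗ μ).prod (μ ∗ μ))) :
    ∫ z, g z ∂(Tq q μ) =
      (1 - q) * ∫ z, g z ∂(μ ∗ μ) + q * ∫ p, g (parallel p) ∂((μ ∗ μ).prod (μ ∗ μ)) := by
  have hpar' : Integrable g (((μ ∗ μ).prod (μ ∗ μ)).map parallel) :=
    (integrable_map_measure hg.aestronglyMeasurable measurable_parallel.aemeasurable).2 hpar
  rw [Tq_eq, integral_add_measure (hconv.smul_measure ENNReal.ofReal_ne_top)
      (hpar'.smul_measure ENNReal.ofReal_ne_top), integral_smul_measure, integral_smul_measure,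
    integral_map measurable_parallel.aemeasurable hg.aestronglyMeasurable,
    ENNReal.toReal_ofReal (sub_nonneg.2 hq.2), ENNReal.toReal_ofReal hq.1,
    smul_eq_mul, smul_eq_mul]

theorem stmt12_general (q C : ℝ) (hq : q ∈ Set.Ioo (0 : ℝ) 1)
    (μ : Measure ℝ) [IsProbabilityMeasure μ] (hsupp : μ (Set.Icc 1 C)ᶜ = 0) :
    ∫ z, z ^ 2 ∂(Tq q μ) ≤
      2 * (1 - q) * (∫ x, x ^ 2 ∂μ) + (2 - q) * (∫ x, x ∂μ) ^ 2 := by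
  have hμI : ∀ᵐ x ∂μ, x ∈ Set.Icc 1 C := mem_ae_iff.2 hsupp
  have hμ₀ : ∀ᵐ x ∂μ, 0 ≤ x := hμI.mono fun x hx => zero_le_one.trans hx.1
  have hμ : MemLp id 2 μ := memLp_of_bounded hμI aestronglyMeasurable_id 2
  have hconv : MemLp id 2 (μ ∗ μ) := memLp_id_conv hμ hμ
  have hconv₀ : ∀ᵐ x ∂(μ ∗ μ), 0 ≤ x := ae_nonneg_conv hμ₀ hμ₀
  have hconv₁ : Integrable id (μ ∗ μ) := hconv.integrable one_le_two
  have hpar := integral_sq_parallel_le hconv₀ hconv₀ hconv₁ hconv₁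
  rw [integral_id_conv (hμ.integrable one_le_two) (hμ.integrable one_le_two)] at hpar
  rw [integral_Tq (g := fun z => z ^ 2) ⟨hq.1.le, hq.2.le⟩ (by fun_prop)
    ((memLp_two_iff_integrable_sq aestronglyMeasurable_id).1 hconv)
    (integrable_sq_parallel hconv₀ hconv₀ hconv₁ hconv₁), integral_sq_conv hμ hμ]
  nlinarith [mul_le_mul_of_nonneg_left hpar hq.1.le]

theorem stmt12 (q C : ℝ) (hq : q ∈ Set.Ioo (0 : ℝ) 1) (hC : 1 ≤ C)
    (μ : Measure ℝ) [IsProbabilityMeasure μ] (hsupp : μ (Set.Icc 1 C)ᶜ = 0) :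
    ∫ z, z ^ 2 ∂(Tq q μ) ≤
      2 * (1 - q) * (∫ x, x ^ 2 ∂μ) + (2 - q) * (∫ x, x ∂μ) ^ 2 :=
  stmt12_general q C hq μ hsupp
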